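/- For all (X,Y) ∈ ℝ², F(X, C_{−1} − Y) = F(X,Y) + C_{−1} − 2Y; consequently the tropical curve Γ̃ is symmetric with respect to the line Y = C_{−1}/2, i.e., the involution ι(X,Y) = (X, C_{−1} − Y) satisfies: (X,Y) ∈ Γ̃ if and only if (X, C_{−1} − Y) ∈ Γ̃. -/

import Mathlib

/-- The tropical polynomial
`F(X,Y) = min(2Y, Y + min((g+1)X, C_g + gX, …, C_1 + X, C_0), C_{-1})`. -/
noncomputable def tropF (g : ℕ) (Cm1 : ℝ) (C : ℕ → ℝ) (P : ℝ × ℝ) : ℝ :=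
  min (2 * P.2)
    (min
      (P.2 + min (((g : ℝ) + 1) * P.1)
        ((Finset.range (g + 1)).inf' ⟨0, Finset.mem_range.mpr (Nat.succ_pos g)⟩
          (fun i => C i + (i : ℝ) * P.1)))
      Cm1)

/-! The reflection `Y ↦ C_{-1} - Y` swaps the terms `2Y` and `C_{-1}` up to adding
`C_{-1} - 2Y`, and shifts `Y + m` by the same amount, so `F ∘ ι = F + (C_{-1} - 2Y)`.
Since `ι` is a smooth involution and the correction term is smooth, `F` is
differentiable at `P` exactly when it is differentiable at `ι P`. -/

theorem min_two_mul_min_sub_eq (m c y : ℝ) :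
    min (2 * (c - y)) (min (c - y + m) c) = min (2 * y) (min (y + m) c) + c - 2 * y := by
  simp only [min_def]
  split_ifs <;> linarith

theorem differentiableAt_iff_of_involutive_of_comp_eq_add
    {𝕜 E F : Type*} [NontriviallyNormedField 𝕜] [NormedAddCommGroup E] [NormedSpace 𝕜 E]
    [NormedAddCommGroup F] [NormedSpace 𝕜 F] {f h : E → F} {σ : E → E}
    (hσ : Function.Involutive σ) (hσd : Differentiable 𝕜 σ) (hh : Differentiable 𝕜 h)
    (hf : ∀ p, f (σ p) = f p + h p) (p : E) :
    DifferentiableAt 𝕜 f p ↔ DifferentiableAt 𝕜 f (σ p) := by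
  have hf_eq : f = (f + h) ∘ σ := funext fun q => by
    simp only [Function.comp_apply, Pi.add_apply, ← hf, hσ q]
  have transfer : ∀ q, DifferentiableAt 𝕜 f q → DifferentiableAt 𝕜 f (σ q) := fun q hq => by
    rw [hf_eq]
    exact DifferentiableAt.comp (σ q) (by rw [hσ q]; exact hq.add (hh q)) (hσd (σ q))
  exact ⟨transfer p, fun hp => hσ p ▸ transfer (σ p) hp⟩

theorem tropF_reflect (g : ℕ) (Cm1 : ℝ) (C : ℕ → ℝ) (X Y : ℝ) :
    tropF g Cm1 C (X, Cm1 - Y) = tropF g Cm1 C (X, Y) + Cm1 - 2 * Y :=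
  min_two_mul_min_sub_eq _ _ _

theorem tropF_symmetry_general (g : ℕ) (Cm1 : ℝ) (C : ℕ → ℝ) :
    (∀ X Y : ℝ, tropF g Cm1 C (X, Cm1 - Y) = tropF g Cm1 C (X, Y) + Cm1 - 2 * Y) ∧
    (∀ X Y : ℝ,
      ¬ DifferentiableAt ℝ (tropF g Cm1 C) (X, Y) ↔
      ¬ DifferentiableAt ℝ (tropF g Cm1 C) (X, Cm1 - Y)) := by
  refine ⟨tropF_reflect g Cm1 C, fun X Y => not_congr ?_⟩
  refine differentiableAt_iff_of_involutive_of_comp_eq_add (σ := fun p => (p.1, Cm1 - p.2))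
    (h := fun p => Cm1 - 2 * p.2) (fun p => by simp) ?_ ?_ ?_ (X, Y)
  · exact differentiable_fst.prodMk ((differentiable_const _).sub differentiable_snd)
  · exact (differentiable_const _).sub (differentiable_snd.const_mul 2)
  · intro p
    rw [tropF_reflect]
    ring

/-- `F(X, C_{-1} - Y) = F(X, Y) + C_{-1} - 2Y`; consequently the tropical curve
`Γ̃` (the non-differentiability locus of `F`) is symmetric with respect to the
line `Y = C_{-1}/2`. -/
theorem tropF_symmetry (g : ℕ) (hg : 1 ≤ g) (Cm1 : ℝ) (C : ℕ → ℝ) :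
    (∀ X Y : ℝ, tropF g Cm1 C (X, Cm1 - Y) = tropF g Cm1 C (X, Y) + Cm1 - 2 * Y) ∧
    (∀ X Y : ℝ,
      ¬ DifferentiableAt ℝ (tropF g Cm1 C) (X, Y) ↔
      ¬ DifferentiableAt ℝ (tropF g Cm1 C) (X, Cm1 - Y)) :=
  tropF_symmetry_general g Cm1 C
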